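/- arXiv:1811.12037 — 4 statements merged into one kernel-verified Lean document; each statement's English description precedes it below -/
import Mathlib

section
/- Let A, B : ℕ × ℕ → ℝ be finitely supported functions satisfying A(k1,k2) = Σ_{t1,t2} B(t1,t2) · (t2 choose k2) · Σ_{0≤s≤t2-k2} (t2-k2 choose s)(t1 choose k1-s) for all k1,k2 (where binomial coefficients vanish outside their range). Then their bivariate generating polynomials satisfy F_A(z1,z2) = F_B(z1+1, z1+z2+1), where F_A(z1,z2) = Σ A(k1,k2) z1^{k1} z2^{k2} and F_B likewise. -/
/-!
By Vandermonde's identity the inner sum over `s` is `(t₂ - k₂ + t₁).choose k₁`, so the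
contribution of a single `B(t₁, t₂)` to `F_A` is
`∑ C(t₂, k₂) z₂^k₂ ∑ C(t₂ - k₂ + t₁, k₁) z₁^k₁ = (z₁ + 1)^t₁ ∑ C(t₂, k₂) z₂^k₂ (z₁ + 1)^(t₂ - k₂)`,
which is `(z₁ + 1)^t₁ (z₁ + z₂ + 1)^t₂` by the binomial theorem. All sums are finite once they run
over a box `range N ×ˢ range N` containing the supports of `A` and `B`.
-/

open Finset

theorem sum_range_choose_mul_ite_choose (m n k : ℕ) :
    ∑ s ∈ range (m + 1), m.choose s * (if s ≤ k then n.choose (k - s) else 0)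
      = (m + n).choose k := by
  rw [Nat.add_choose_eq, Nat.sum_antidiagonal_eq_sum_range_succ (fun i j => m.choose i * n.choose j)]
  have hite : ∀ s ∈ range (k + 1),
      m.choose s * n.choose (k - s) = m.choose s * (if s ≤ k then n.choose (k - s) else 0) :=
    fun s hs => by rw [if_pos (Nat.lt_succ_iff.1 (mem_range.1 hs))]
  rw [sum_congr rfl hite, sum_subset (range_subset_range.2 (le_max_left (m + 1) (k + 1))),
    sum_subset (range_subset_range.2 (le_max_right (m + 1) (k + 1)))]
  · intro s _ hs
    rw [if_neg (by rw [mem_range] at hs; omega), mul_zero]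
  · intro s _ hs
    rw [Nat.choose_eq_zero_of_lt (by rw [mem_range] at hs; omega), zero_mul]

variable {R : Type*} [CommSemiring R]

theorem sum_range_choose_mul_pow_mul_pow (x y : R) {n N : ℕ} (h : n < N) :
    ∑ k ∈ range N, (n.choose k : R) * x ^ k * y ^ (n - k) = (x + y) ^ n := by
  rw [add_pow, sum_subset (range_subset_range.2 h)]
  · exact sum_congr rfl fun k _ => by ring
  · intro k _ hk
    rw [Nat.choose_eq_zero_of_lt (by simpa using hk), Nat.cast_zero, mul_zero]

theorem sum_product_range_choose_mul_choose_mul_pow (x y : R) {t₁ t₂ N : ℕ} (h : t₁ + t₂ < N) :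
    ∑ k ∈ range N ×ˢ range N,
        ((t₂.choose k.2 * (t₂ - k.2 + t₁).choose k.1 : ℕ) : R) * x ^ k.1 * y ^ k.2
      = (x + 1) ^ t₁ * (x + y + 1) ^ t₂ := by
  have hinner : ∀ k₂ ∈ range N,
      ∑ k₁ ∈ range N, ((t₂.choose k₂ * (t₂ - k₂ + t₁).choose k₁ : ℕ) : R) * x ^ k₁ * y ^ k₂
        = (t₂.choose k₂ : R) * y ^ k₂ * (x + 1) ^ (t₂ - k₂) * (x + 1) ^ t₁ := by
    intro k₂ _
    have hsum := sum_range_choose_mul_pow_mul_pow x 1 (n := t₂ - k₂ + t₁) (N := N) (by omega)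
    simp only [one_pow, mul_one] at hsum
    rw [mul_assoc _ _ ((x + 1) ^ t₁), ← pow_add, ← hsum, mul_sum]
    exact sum_congr rfl fun k₁ _ => by push_cast; ring
  rw [sum_product_right, sum_congr rfl hinner, ← sum_mul,
    sum_range_choose_mul_pow_mul_pow y (x + 1) (by omega : t₂ < N)]
  ring

/-- Two-variable inclusion-exclusion in generating-function form: if
`A(k1,k2) = ∑_{t1,t2} B(t1,t2) (t2 choose k2) ∑_{0 ≤ s ≤ t2-k2} (t2-k2 choose s)(t1 choose k1-s)`,
then `F_A(z1,z2) = F_B(z1+1, z1+z2+1)`. -/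
theorem stmt7 (A B : (ℕ × ℕ) →₀ ℝ)
    (h : ∀ k1 k2 : ℕ, A (k1, k2) = B.sum (fun t c =>
        c * (t.2.choose k2 : ℝ) *
          ∑ s ∈ Finset.range (t.2 - k2 + 1),
            ((t.2 - k2).choose s : ℝ) *
              (if s ≤ k1 then (t.1.choose (k1 - s) : ℝ) else 0))) :
    ∀ z1 z2 : ℝ,
      A.sum (fun k c => c * z1 ^ k.1 * z2 ^ k.2)
        = B.sum (fun t c => c * (z1 + 1) ^ t.1 * (z1 + z2 + 1) ^ t.2) := by
  intro z1 z2
  obtain ⟨N, hN⟩ := ((A.support ∪ B.support).image fun k => k.1 + k.2).exists_nat_subset_range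
  have hbound : ∀ k ∈ A.support ∪ B.support, k.1 + k.2 < N := fun k hk =>
    mem_range.1 (hN (mem_image_of_mem _ hk))
  have hA : A.support ⊆ range N ×ˢ range N := fun k hk => by
    have := hbound k (mem_union_left _ hk)
    simp only [mem_product, mem_range]
    omega
  have hcoef : ∀ k, A k = ∑ t ∈ B.support,
      B t * ((t.2.choose k.2 * (t.2 - k.2 + t.1).choose k.1 : ℕ) : ℝ) := fun k => by
    rw [h k.1 k.2, Finsupp.sum]
    refine sum_congr rfl fun t _ => ?_
    rw [← sum_range_choose_mul_ite_choose]
    push_cast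
    ring
  rw [Finsupp.sum_of_support_subset A hA _ fun _ _ => by ring, Finsupp.sum]
  simp_rw [hcoef, sum_mul]
  rw [sum_comm]
  refine sum_congr rfl fun t ht => ?_
  rw [mul_assoc, ← sum_product_range_choose_mul_choose_mul_pow z1 z2
    (hbound t (mem_union_right _ ht)), mul_sum]
  exact sum_congr rfl fun k _ => by ring
end

section
/- Let X_1,...,X_n be i.i.d. over a finite alphabet and w a non-overlapping word of length m with 2m ≤ n+2. Let N_w = Σ_{i=1}^{n-m+1} 1[X_i^{i+m-1} = w]. Then E(N_w^2) = (n-m+1)P(w) + (n-2m+2)(n-2m+1)P(w)^2, and consequently Var(N_w) = E(N_w) + (n-2m+2)(n-2m+1)P(w)^2 - E(N_w)^2. -/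
def occursAt {α : Type*} (w x : List α) (i : ℕ) : Prop :=
  i + w.length ≤ x.length ∧ (x.drop i).take w.length = w

def NonOverlappingPair {α : Type*} (w1 w2 : List α) : Prop :=
  ¬ ∃ (x : List α) (i j : ℕ), x.length < w1.length + w2.length ∧
      occursAt w1 x i ∧ occursAt w2 x j ∧ (w1 ≠ w2 ∨ i ≠ j)

def NonOverlapping {α : Type*} (w : List α) : Prop := NonOverlappingPair w w


/-!
Write `N_w = ∑ i, I i` with `I i` the indicator of an occurrence of `w` at position `i`, among
the `K = n - m + 1` positions. Each `I i` prescribes `m` distinct coordinates, so `E (I i) = P(w)`;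
for `|i - j| ≥ m` the two windows are disjoint, so `E (I i * I j) = P(w)²` by independence; for
`0 < |i - j| < m` the product `I i * I j` vanishes because `w` is non-overlapping; and `I i² = I i`.
Hence `E (N_w²) = K P(w) + c P(w)²`, where `c = (K - m)(K - m + 1)` counts the ordered pairs of
positions at distance at least `m`. The variance identity is the same equation, as `E N_w = K P(w)`.
-/

open Finset

/-- The expectation of `f X` when the coordinates of `X : ι → A` are i.i.d. with law `p`. -/
def prodMean {A ι : Type*} [Fintype A] [Fintype ι] [DecidableEq ι] (p : A → ℝ)
    (f : (ι → A) → ℝ) : ℝ :=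
  ∑ x : ι → A, (∏ i, p (x i)) * f x

section prodMean

variable {A ι : Type*} [Fintype A] [Fintype ι] [DecidableEq ι] (p : A → ℝ)

theorem prodMean_sum {κ : Type*} (s : Finset κ) (f : κ → (ι → A) → ℝ) :
    prodMean p (fun x => ∑ k ∈ s, f k x) = ∑ k ∈ s, prodMean p (f k) := by
  simp only [prodMean, mul_sum]
  exact sum_comm

theorem prodMean_ite_comp_eq [DecidableEq A] (hp1 : ∑ a, p a = 1)
    {κ : Type*} [Fintype κ] {e : κ → ι} (he : Function.Injective e) (u : κ → A)
    [DecidablePred fun x : ι → A => ∀ k, x (e k) = u k] :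
    prodMean p (fun x => if ∀ k, x (e k) = u k then 1 else 0) = ∏ k, p (u k) := by
  -- the indicator factors over the coordinates, turning the sum over `x` into a product of sums
  set f : ι → A → ℝ := fun i a => p a * if ∀ k, e k = i → a = u k then 1 else 0
  have hf : ∀ x : ι → A, (∏ i, p (x i)) * (if ∀ k, x (e k) = u k then 1 else 0)
      = ∏ i, f i (x i) := by
    intro x
    simp only [f, prod_mul_distrib, Fintype.prod_boole]
    exact congrArg _ (if_congr ⟨fun h i k hk => hk ▸ h k, fun h k => h _ k rfl⟩ rfl rfl)
  have hsum_off : ∀ i ∉ Set.range e, ∑ a, f i a = 1 := by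
    intro i hi
    simp only [f]
    simpa [show ∀ k, e k ≠ i from fun k hk => hi ⟨k, hk⟩] using hp1
  have hsum_on : ∀ k, ∑ a, f (e k) a = p (u k) := by
    intro k
    simp [f, he.eq_iff]
  rw [prodMean, Fintype.sum_congr _ _ hf, ← Fintype.prod_sum]
  exact (Fintype.prod_of_injective e he _ _ hsum_off fun k => (hsum_on k).symm).symm

end prodMean

theorem NonOverlapping.add_length_le {α : Type*} {w x : List α} (hw : NonOverlapping w)
    {i j : ℕ} (hi : occursAt w x i) (hj : occursAt w x j) (hij : i < j) :
    i + w.length ≤ j := by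
  by_contra! hclose
  -- the stretch of `x` from `i` to `j + |w|` is shorter than `2 |w|` and contains both occurrences
  have hlen : ((x.drop i).take (j - i + w.length)).length = j - i + w.length := by
    simp only [List.length_take, List.length_drop]; have := hj.1; omega
  refine hw ⟨(x.drop i).take (j - i + w.length), 0, j - i, by omega,
    ⟨by omega, ?_⟩, ⟨by omega, ?_⟩, Or.inr (by omega)⟩
  · rw [List.drop_zero, List.take_take, min_eq_left (by omega)]
    exact hi.2
  · rw [List.drop_take, List.drop_drop, List.take_take, min_eq_left (by omega),
      Nat.add_sub_cancel' hij.le]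
    exact hj.2

theorem sum_range_ite_add_le (m c K : ℕ) :
    ∑ j ∈ range K, (if j + m ≤ c then 1 else 0 : ℕ) = min K (c + 1 - m) := by
  rw [sum_boole, Nat.cast_id, ← card_range (min K (c + 1 - m))]
  congr 1
  ext j
  simp only [mem_filter, mem_range]
  omega

theorem sum_range_sum_range_ite_far {m : ℕ} (hm : 1 ≤ m) (K : ℕ) :
    ∑ i ∈ range K, ∑ j ∈ range K, (if i + m ≤ j ∨ j + m ≤ i then 1 else 0 : ℕ)
      = (K - m) * (K + 1 - m) := by
  induction K with
  | zero => simp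
  | succ K ih =>
    have hrow : ∑ i ∈ range K, (if i + m ≤ K ∨ K + m ≤ i then 1 else 0 : ℕ)
        = ∑ i ∈ range K, (if i + m ≤ K then 1 else 0 : ℕ) :=
      sum_congr rfl fun i hi => if_congr (by rw [mem_range] at hi; omega) rfl rfl
    have hcol : ∑ j ∈ range K, (if K + m ≤ j ∨ j + m ≤ K then 1 else 0 : ℕ)
        = ∑ j ∈ range K, (if j + m ≤ K then 1 else 0 : ℕ) :=
      sum_congr rfl fun j hj => if_congr (by rw [mem_range] at hj; omega) rfl rfl
    rw [sum_range_succ, sum_range_succ, sum_congr rfl fun i _ => sum_range_succ _ _,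
      sum_add_distrib, ih, hrow, hcol, sum_range_ite_add_le, if_neg (by omega)]
    rcases le_or_gt m K with hmK | hKm
    · obtain ⟨a, rfl⟩ := Nat.exists_eq_add_of_le hmK
      rw [min_eq_right (by omega), show m + a + 1 + 1 - m = a + 2 by omega,
        show m + a + 1 - m = a + 1 by omega, Nat.add_sub_cancel_left]
      ring
    · rw [show K + 1 - m = 0 by omega, show K - m = 0 by omega]
      simp

theorem sum_fin_sum_fin_ite_far {m : ℕ} (hm : 1 ≤ m) (K : ℕ) :
    ∑ i : Fin K, ∑ j : Fin K, (if (i : ℕ) + m ≤ j ∨ (j : ℕ) + m ≤ i then 1 else 0 : ℝ)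
      = ((K - m) * (K + 1 - m) : ℕ) := by
  rw [← sum_range_sum_range_ite_far hm K, Fin.sum_univ_eq_sum_range
    (fun i => ∑ j : Fin K, (if i + m ≤ j ∨ (j : ℕ) + m ≤ i then 1 else 0 : ℝ))]
  push_cast
  exact sum_congr rfl fun i _ =>
    Fin.sum_univ_eq_sum_range (fun j => (if i + m ≤ j ∨ j + m ≤ i then 1 else 0 : ℝ)) K

theorem val_add_val_lt_of_le {n m : ℕ} (hmn : m ≤ n) (i : Fin (n - m + 1)) (j : Fin m) :
    (i : ℕ) + j < n := by
  have := i.isLt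
  have := j.isLt
  omega

section window

variable {A : Type*} {n m : ℕ} (hmn : m ≤ n) (w : Fin m → A)

def windowPos (i : Fin (n - m + 1)) (j : Fin m) : Fin n :=
  ⟨i + j, val_add_val_lt_of_le hmn i j⟩

theorem windowPos_injective (i : Fin (n - m + 1)) : Function.Injective (windowPos hmn i) :=
  fun a b hab => Fin.ext (by simpa [windowPos] using hab)

theorem occursAt_ofFn_of_forall_windowPos {i : Fin (n - m + 1)} {x : Fin n → A}
    (h : ∀ j, x (windowPos hmn i j) = w j) : occursAt (List.ofFn w) (List.ofFn x) i := by
  refine ⟨by simp only [List.length_ofFn]; have := i.isLt; omega, ?_⟩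
  apply List.ext_getElem
    (by simp only [List.length_take, List.length_drop, List.length_ofFn]; have := i.isLt; omega)
  intro t ht _
  simp only [List.length_take, List.length_drop, List.length_ofFn] at ht
  simpa [windowPos] using h ⟨t, by omega⟩

variable [DecidableEq A]

def windowIndicator (i : Fin (n - m + 1)) (x : Fin n → A) : ℝ :=
  if ∀ j, x (windowPos hmn i j) = w j then 1 else 0

theorem windowIndicator_mul_eq_zero (hw : NonOverlapping (List.ofFn w))
    {i j : Fin (n - m + 1)} (hij : i < j) (hji : (j : ℕ) < i + m) (x : Fin n → A) :
    windowIndicator hmn w i x * windowIndicator hmn w j x = 0 := by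
  rw [windowIndicator, windowIndicator, ite_zero_mul_ite_zero, if_neg]
  rintro ⟨hi, hj⟩
  have := hw.add_length_le (occursAt_ofFn_of_forall_windowPos hmn w hi)
    (occursAt_ofFn_of_forall_windowPos hmn w hj) hij
  simp only [List.length_ofFn] at this
  omega

variable [Fintype A] (p : A → ℝ)

theorem prodMean_windowIndicator (hp1 : ∑ a, p a = 1) (i : Fin (n - m + 1)) :
    prodMean p (windowIndicator hmn w i) = ∏ j, p (w j) :=
  prodMean_ite_comp_eq p hp1 (windowPos_injective hmn i) w

theorem prodMean_windowIndicator_mul_of_add_le (hp1 : ∑ a, p a = 1) {i j : Fin (n - m + 1)}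
    (hij : (i : ℕ) + m ≤ j) :
    prodMean p (fun x => windowIndicator hmn w i x * windowIndicator hmn w j x)
      = (∏ k, p (w k)) ^ 2 := by
  have hinj : Function.Injective (Sum.elim (windowPos hmn i) (windowPos hmn j)) :=
    (windowPos_injective hmn i).sumElim (windowPos_injective hmn j) fun a b hab => by
      have := congrArg Fin.val hab
      simp only [windowPos] at this
      omega
  have hprod : ∀ x : Fin n → A, windowIndicator hmn w i x * windowIndicator hmn w j x
      = if ∀ k, x (Sum.elim (windowPos hmn i) (windowPos hmn j) k) = Sum.elim w w k
        then 1 else 0 := by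
    intro x
    simp only [windowIndicator, ite_zero_mul_ite_zero, mul_one, Sum.forall, Sum.elim_inl,
      Sum.elim_inr]
  simp only [hprod, prodMean_ite_comp_eq p hp1 hinj, Fintype.prod_sum_type, Sum.elim_inl,
    Sum.elim_inr, sq]

theorem prodMean_windowIndicator_mul_of_lt (hp1 : ∑ a, p a = 1)
    (hw : NonOverlapping (List.ofFn w)) {i j : Fin (n - m + 1)} (hij : i < j) :
    prodMean p (fun x => windowIndicator hmn w i x * windowIndicator hmn w j x)
      = if (i : ℕ) + m ≤ j then (∏ k, p (w k)) ^ 2 else 0 := by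
  split_ifs with hfar
  · exact prodMean_windowIndicator_mul_of_add_le hmn w p hp1 hfar
  · simp only [windowIndicator_mul_eq_zero hmn w hw hij (not_le.mp hfar), prodMean, mul_zero,
      sum_const_zero]

theorem prodMean_windowIndicator_mul (hp1 : ∑ a, p a = 1) (hw : NonOverlapping (List.ofFn w))
    (i j : Fin (n - m + 1)) :
    prodMean p (fun x => windowIndicator hmn w i x * windowIndicator hmn w j x)
      = if i = j then ∏ k, p (w k)
        else if (i : ℕ) + m ≤ j ∨ (j : ℕ) + m ≤ i then (∏ k, p (w k)) ^ 2 else 0 := by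
  rcases lt_trichotomy i j with hij | rfl | hji
  · rw [if_neg hij.ne, prodMean_windowIndicator_mul_of_lt hmn w p hp1 hw hij]
    exact if_congr (by omega) rfl rfl
  · have hidem : ∀ x, windowIndicator hmn w i x * windowIndicator hmn w i x
        = windowIndicator hmn w i x := fun x => by
      unfold windowIndicator; split_ifs <;> norm_num
    simp only [hidem, if_true, prodMean_windowIndicator hmn w p hp1]
  · simp only [mul_comm (windowIndicator hmn w i _)]
    rw [if_neg hji.ne', prodMean_windowIndicator_mul_of_lt hmn w p hp1 hw hji]
    exact if_congr (by omega) rfl rfl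

theorem prodMean_sum_windowIndicator (hp1 : ∑ a, p a = 1) :
    prodMean p (fun x => ∑ i, windowIndicator hmn w i x) = (n - m + 1 : ℕ) * ∏ k, p (w k) := by
  simp [prodMean_sum, prodMean_windowIndicator hmn w p hp1]

theorem prodMean_sq_sum_windowIndicator (hp1 : ∑ a, p a = 1) (hm : 1 ≤ m)
    (hw : NonOverlapping (List.ofFn w)) :
    prodMean p (fun x => (∑ i, windowIndicator hmn w i x) ^ 2)
      = (n - m + 1 : ℕ) * ∏ k, p (w k)
        + (n + 2 - 2 * m : ℕ) * (n + 1 - 2 * m : ℕ) * (∏ k, p (w k)) ^ 2 := by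
  have hsplit : ∀ (P : ℝ) (i j : Fin (n - m + 1)),
      (if i = j then P else if (i : ℕ) + m ≤ j ∨ (j : ℕ) + m ≤ i then P ^ 2 else 0)
        = (if i = j then P else 0)
          + P ^ 2 * if (i : ℕ) + m ≤ j ∨ (j : ℕ) + m ≤ i then 1 else 0 := by
    intro P i j
    rcases eq_or_ne i j with rfl | hij
    · simp only [if_true, if_neg (show ¬((i : ℕ) + m ≤ i ∨ (i : ℕ) + m ≤ i) by omega)]
      ring
    · simp only [if_neg hij, zero_add, mul_ite, mul_one, mul_zero]
  calc prodMean p (fun x => (∑ i, windowIndicator hmn w i x) ^ 2)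
      = ∑ i, ∑ j,
          prodMean p (fun x => windowIndicator hmn w i x * windowIndicator hmn w j x) := by
        simp only [sq, sum_mul_sum, prodMean_sum]
    _ = ∑ i : Fin (n - m + 1), ∑ j : Fin (n - m + 1), ((if i = j then ∏ k, p (w k) else 0)
          + (∏ k, p (w k)) ^ 2 * if (i : ℕ) + m ≤ j ∨ (j : ℕ) + m ≤ i then 1 else 0) := by
        simp only [prodMean_windowIndicator_mul hmn w p hp1 hw, hsplit]
    _ = (n - m + 1 : ℕ) * ∏ k, p (w k)
          + (∏ k, p (w k)) ^ 2 * ((n - m + 1 - m) * (n - m + 1 + 1 - m) : ℕ) := by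
        simp only [sum_add_distrib, ← mul_sum, sum_ite_eq, mem_univ,
          if_true, sum_fin_sum_fin_ite_far hm, sum_const, card_univ, Fintype.card_fin,
          nsmul_eq_mul]
    _ = _ := by
        rw [show n - m + 1 - m = n + 1 - 2 * m by omega,
          show n - m + 1 + 1 - m = n + 2 - 2 * m by omega]
        push_cast
        ring

end window

/-- Second moment and variance of the sliding-block count of a non-overlapping word:
`E(N_w²) = (n-m+1)P(w) + (n-2m+2)(n-2m+1)P(w)²` and
`Var(N_w) = E(N_w) + (n-2m+2)(n-2m+1)P(w)² - E(N_w)²`. -/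
theorem stmt9 {A : Type*} [Fintype A] [DecidableEq A]
    (p : A → ℝ) (hp1 : ∑ a, p a = 1)
    (n m : ℕ) (hm : 1 ≤ m) (hmn : m ≤ n)
    (w : Fin m → A) (hw : NonOverlapping (List.ofFn w))
    (N : (Fin n → A) → ℝ)
    (hN : ∀ x, N x = ∑ i : Fin (n - m + 1),
        if ∀ j : Fin m, x ⟨i.val + j.val, by have := i.isLt; have := j.isLt; omega⟩ = w j
        then (1 : ℝ) else 0)
    (Pw : ℝ) (hPw : Pw = ∏ j, p (w j)) :
    (∑ x : Fin n → A, (∏ i, p (x i)) * (N x) ^ 2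
        = ((n - m + 1 : ℕ) : ℝ) * Pw +
            ((n + 2 - 2 * m : ℕ) : ℝ) * ((n + 1 - 2 * m : ℕ) : ℝ) * Pw ^ 2) ∧
    ((∑ x : Fin n → A, (∏ i, p (x i)) * (N x) ^ 2)
        - (∑ x : Fin n → A, (∏ i, p (x i)) * N x) ^ 2
      = (∑ x : Fin n → A, (∏ i, p (x i)) * N x)
          + ((n + 2 - 2 * m : ℕ) : ℝ) * ((n + 1 - 2 * m : ℕ) : ℝ) * Pw ^ 2
          - (∑ x : Fin n → A, (∏ i, p (x i)) * N x) ^ 2) := by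
  have hN' : N = fun x => ∑ i, windowIndicator hmn w i x := funext hN
  have hmean : prodMean p N = (n - m + 1 : ℕ) * Pw := by
    rw [hN', hPw, prodMean_sum_windowIndicator hmn w p hp1]
  have hsecond : prodMean p (fun x => N x ^ 2)
      = (n - m + 1 : ℕ) * Pw + (n + 2 - 2 * m : ℕ) * (n + 1 - 2 * m : ℕ) * Pw ^ 2 := by
    rw [hN', hPw, prodMean_sq_sum_windowIndicator hmn w p hp1 hm hw]
  unfold prodMean at hmean hsecond
  exact ⟨hsecond, by rw [hsecond, hmean]⟩
end

section
/- Let w be a non-overlapping word of length m over a finite alphabet, X_1,...,X_n i.i.d., and N_w = Σ_{i=1}^{n-m+1} 1[X_i^{i+m-1} = w]. Then for every t ≥ 1, E(N_w^t) = Σ_{s=1}^{min(T,t)} A_{t,s} · (n - s·m + s choose s) · P(w)^s, where A_{t,s} = Σ_r (s choose r) r^t (-1)^{s-r} is the number of surjections from {1,...,t} onto {1,...,s}, and T = max{t ∈ ℕ : n - t·m ≥ 0}. -/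
/-!
Expanding `N_w^t = (∑ᵢ 1ᵢ)^t` gives a sum over maps `g : Fin t → positions`; the indicators are
idempotent, so the product only depends on the image `S` of `g`, and by inclusion–exclusion
exactly `A_{t,|S|}` maps have image `S`. If the windows `[i, i + m)`, `i ∈ S`, are pairwise
disjoint, the event `∏_{i ∈ S} 1ᵢ = 1` fixes `m |S|` distinct letters, so it has probability
`P(w)^|S|`; otherwise two of the windows overlap and, `w` being non-overlapping, the event is empty.
The sets of `s` positions in `{0, …, n - m}` with pairwise gaps at least `m` satisfy Pascal's
recursion in the length (the last position is used or not), whence their number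
`(n - s m + s choose s)`.
-/

open Finset

theorem prod_comp_eq_prod_image {ι κ M : Type*} [Fintype κ] [DecidableEq ι] [CommMonoid M]
    {f : ι → M} (hf : ∀ i, IsIdempotentElem (f i)) (g : κ → ι) :
    ∏ k, f (g k) = ∏ i ∈ image g univ, f i := by
  rw [prod_comp]
  refine prod_congr rfl fun i hi => ?_
  obtain ⟨k, -, rfl⟩ := mem_image.1 hi
  obtain ⟨c, hc⟩ := Nat.exists_eq_succ_of_ne_zero (card_ne_zero.2 ⟨k, by simp⟩ :
    #{a | g a = g k} ≠ 0)
  rw [hc, (hf _).pow_succ_eq]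

section Surjections

variable {ι : Type*} [Fintype ι] [DecidableEq ι]

theorem sum_pow_eq_sum_powerset {R : Type*} [CommSemiring R] {f : ι → R}
    (hf : ∀ i, IsIdempotentElem (f i)) (t : ℕ) :
    (∑ i, f i) ^ t = ∑ S ∈ univ.powerset, #{g : Fin t → ι | image g univ = S} • ∏ i ∈ S, f i := by
  rw [sum_pow', Fintype.piFinset_univ,
    ← sum_fiberwise_of_maps_to (g := fun g => image g univ) (t := univ.powerset)
      (fun g _ => mem_powerset.2 (subset_univ _))]
  refine sum_congr rfl fun S _ => ?_
  rw [← sum_const]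
  refine sum_congr rfl fun g hg => ?_
  rw [prod_comp_eq_prod_image hf, (mem_filter.1 hg).2]

theorem card_filter_image_subset (t : ℕ) (U : Finset ι) :
    #{g : Fin t → ι | image g univ ⊆ U} = #U ^ t := by
  have : ({g : Fin t → ι | image g univ ⊆ U} : Finset _) = Fintype.piFinset fun _ => U := by
    ext g; simp [image_subset_iff]
  simp [this, Fintype.card_piFinset]

theorem card_filter_image_eq_sum_powerset (t : ℕ) (S : Finset ι) :
    (#{g : Fin t → ι | image g univ = S} : ℤ)
      = ∑ T ∈ S.powerset, (-1 : ℤ) ^ #T * ((#S - #T) ^ t : ℕ) := by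
  have key := inclusion_exclusion_sum_inf_compl (G := ℤ) S
    (fun b => ({g : Fin t → ι | b ∉ image g univ} : Finset _))
    (fun g => if image g univ ⊆ S then 1 else 0)
  convert key using 1
  · rw [sum_boole]
    congr 2
    ext g
    simp only [mem_filter, mem_univ, true_and, mem_inf, mem_compl, not_not]
    exact ⟨fun h => ⟨fun b hb => h ▸ hb, h.le⟩, fun h => h.2.antisymm h.1⟩
  · refine sum_congr rfl fun T hT => ?_
    rw [sum_boole, zsmul_eq_mul, ← card_sdiff_of_subset (mem_powerset.1 hT),
      ← card_filter_image_subset t (S \ T)]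
    congr 3
    ext g
    simp only [mem_filter, mem_univ, true_and, mem_inf, image_subset_iff, mem_image, subset_sdiff,
      disjoint_left, not_exists]
    exact ⟨fun h => ⟨fun b hb k hk => h.2 ⟨k, hk⟩ hb, h.1⟩,
      fun h => ⟨h.2, fun b ⟨k, hk⟩ hb => h.1 b hb k hk⟩⟩

/-- The paper's `A_{t,s}`; by `card_filter_image_eq` it counts the surjections `Fin t → Fin s`. -/
def surjCount (R : Type*) [CommRing R] (t s : ℕ) : R :=
  ∑ r ∈ range (s + 1), (s.choose r : R) * (r : R) ^ t * (-1) ^ (s - r)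

variable {R : Type*} [CommRing R]

theorem card_filter_image_eq (t : ℕ) (S : Finset ι) :
    (#{g : Fin t → ι | image g univ = S} : R) = surjCount R t #S := by
  have h := congrArg (Int.cast : ℤ → R) (card_filter_image_eq_sum_powerset t S)
  push_cast at h
  rw [h, sum_powerset_apply_card (fun k => (-1 : R) ^ k * ((#S - k : ℕ) : R) ^ t), surjCount,
    ← sum_range_reflect]
  refine sum_congr rfl fun r hr => ?_
  have hr : r ≤ #S := Nat.lt_succ_iff.1 (mem_range.1 hr)
  rw [nsmul_eq_mul, Nat.add_sub_cancel, Nat.choose_symm hr, Nat.sub_sub_self hr]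
  ring

theorem surjCount_eq_zero_of_lt {t s : ℕ} (h : t < s) : surjCount R t s = 0 := by
  have hcount := card_filter_image_eq (R := R) t (univ : Finset (Fin s))
  rw [card_univ, Fintype.card_fin] at hcount
  rw [← hcount, card_eq_zero.2 (filter_eq_empty_iff.2 fun g _ hg => ?_), Nat.cast_zero]
  have := (card_image_le (s := univ) (f := g)).trans_eq (card_fin t)
  rw [hg, card_fin] at this
  omega

theorem surjCount_zero_right {t : ℕ} (ht : t ≠ 0) : surjCount R t 0 = 0 := by
  simp [surjCount, ht]

end Surjections

theorem sum_prod_mul_prod_boole_eq_prod {R ι κ A : Type*} [CommSemiring R] [Fintype ι]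
    [DecidableEq ι] [Fintype A] [DecidableEq A] {p : A → R} (hp : ∑ a, p a = 1)
    {T : Finset κ} {e : κ → ι} (he : Set.InjOn e T) (v : κ → A) :
    ∑ x : ι → A, (∏ i, p (x i)) * ∏ k ∈ T, (if x (e k) = v k then 1 else 0)
      = ∏ k ∈ T, p (v k) := by
  have hfactor : ∀ x : ι → A, (∏ i, p (x i)) * ∏ k ∈ T, (if x (e k) = v k then 1 else 0)
      = ∏ i, (p (x i) * ∏ k ∈ T with e k = i, if x i = v k then 1 else 0) := by
    intro x
    rw [prod_mul_distrib, ← prod_fiberwise T e]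
    refine congrArg _ (prod_congr rfl fun i _ => prod_congr rfl fun k hk => ?_)
    rw [(mem_filter.1 hk).2]
  have hfiber : ∀ i, ∑ a, p a * ∏ k ∈ T with e k = i, (if a = v k then 1 else 0)
      = ∏ k ∈ T with e k = i, p (v k) := by
    intro i
    have hsub : (T.filter (e · = i) : Set κ).Subsingleton := fun k hk l hl => by
      rw [coe_filter] at hk hl
      exact he hk.1 hl.1 (hk.2.trans hl.2.symm)
    rcases hsub.eq_empty_or_singleton with h | ⟨k, h⟩
    · rw [coe_eq_empty.1 h]
      simp [hp]
    · rw [coe_eq_singleton.1 h]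
      simp
  rw [Fintype.sum_congr _ _ hfactor,
    ← Fintype.prod_sum fun i a => p a * ∏ k ∈ T with e k = i, if a = v k then 1 else 0]
  simp_rw [hfiber]
  exact prod_fiberwise T e _

def IsSeparated (m : ℕ) (S : Finset ℕ) : Prop := ∀ i ∈ S, ∀ j ∈ S, i < j → i + m ≤ j

instance (m : ℕ) : DecidablePred (IsSeparated m) := fun _ => by
  unfold IsSeparated; infer_instance

namespace IsSeparated

variable {m : ℕ} {S T : Finset ℕ}

theorem mono (h : IsSeparated m S) (hTS : T ⊆ S) : IsSeparated m T :=
  fun i hi j hj => h i (hTS hi) j (hTS hj)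

theorem insert_of_lt (h : IsSeparated m S) {L : ℕ} (hL : ∀ i ∈ S, i + m ≤ L) :
    IsSeparated m (insert L S) := by
  intro i hi j hj hij
  rcases mem_insert.1 hi with rfl | hiS <;> rcases mem_insert.1 hj with rfl | hjS
  · omega
  · have := hL j hjS; omega
  · exact hL i hiS
  · exact h i hiS j hjS hij

end IsSeparated

theorem card_separated_succ {m : ℕ} (hm : 1 ≤ m) (L s : ℕ) :
    #{S ∈ (range (L + 1)).powersetCard (s + 1) | IsSeparated m S}
      = #{S ∈ (range L).powersetCard (s + 1) | IsSeparated m S}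
        + #{S ∈ (range (L + 1 - m)).powersetCard s | IsSeparated m S} := by
  rw [← card_filter_add_card_filter_not (L ∈ ·), add_comm, filter_filter, filter_filter]
  congr 1
  · congr 1
    ext S
    simp only [mem_filter, mem_powersetCard, subset_iff, mem_range]
    constructor
    · rintro ⟨⟨hS, hc⟩, hsep, hL⟩
      refine ⟨⟨fun i hi => lt_of_le_of_ne (Nat.lt_succ_iff.1 (hS hi)) ?_, hc⟩, hsep⟩
      rintro rfl
      exact hL hi
    · rintro ⟨⟨hS, hc⟩, hsep⟩
      exact ⟨⟨fun i hi => Nat.lt_succ_of_lt (hS hi), hc⟩, hsep, fun hL => (hS hL).false⟩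
  · refine card_nbij' (·.erase L) (insert L) ?_ ?_ ?_ ?_
    · intro S hS
      simp only [coe_filter, mem_powersetCard, subset_iff, mem_range, Set.mem_ofPred_eq] at hS ⊢
      obtain ⟨⟨hS, hc⟩, hsep, hL⟩ := hS
      refine ⟨⟨fun i hi => ?_, by rw [card_erase_of_mem hL, hc]; rfl⟩, hsep.mono (erase_subset _ _)⟩
      have hiL := (mem_erase.1 hi)
      have := hsep i hiL.2 L hL (lt_of_le_of_ne (Nat.lt_succ_iff.1 (hS hiL.2)) hiL.1)
      omega
    · intro T hT
      simp only [coe_filter, mem_powersetCard, subset_iff, mem_range, Set.mem_ofPred_eq] at hT ⊢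
      obtain ⟨⟨hT, hc⟩, hsep⟩ := hT
      have hLT : L ∉ T := fun h => by have := hT h; omega
      refine ⟨⟨fun i hi => ?_, by rw [card_insert_of_notMem hLT, hc]⟩,
        hsep.insert_of_lt fun i hi => ?_, mem_insert_self _ _⟩
      · rcases mem_insert.1 hi with rfl | hi
        · omega
        · have := hT hi; omega
      · have := hT hi; omega
    · intro S hS
      exact insert_erase (mem_filter.1 hS).2.2
    · intro T hT
      refine erase_insert fun h => ?_
      have := mem_range.1 ((mem_powersetCard.1 (mem_filter.1 hT).1).1 h)
      omega

theorem card_separated {m : ℕ} (hm : 1 ≤ m) (L s : ℕ) :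
    #{S ∈ (range L).powersetCard s | IsSeparated m S} = (L - (s - 1) * (m - 1)).choose s := by
  induction L using Nat.strong_induction_on generalizing s with
  | _ L ih =>
    rcases s with _ | s
    · simp [IsSeparated, filter_singleton]
    rcases L with _ | L
    · simp
    rw [card_separated_succ hm, ih L (by omega), ih (L + 1 - m) (by omega)]
    obtain ⟨b, rfl⟩ : ∃ b, m = b + 1 := ⟨m - 1, by omega⟩
    rcases s with _ | a
    · simp
    simp only [Nat.add_sub_cancel, add_mul, one_mul]
    by_cases hL : a * b + b ≤ L
    · rw [show L + 1 - (a * b + b) = L - (a * b + b) + 1 by omega,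
        show L + 1 - (b + 1) - a * b = L - (a * b + b) by omega, Nat.choose_succ_succ', add_comm]
    · rw [show L + 1 - (a * b + b) = 0 by omega, show L - (a * b + b) = 0 by omega,
        show L + 1 - (b + 1) - a * b = 0 by omega]
      simp

theorem isSeparated_map_val {m L : ℕ} {S : Finset (Fin L)} :
    IsSeparated m (S.map Fin.valEmbedding) ↔ ∀ i ∈ S, ∀ j ∈ S, i < j → (i : ℕ) + m ≤ j := by
  simp [IsSeparated]

theorem card_separated_fin {m : ℕ} (hm : 1 ≤ m) (L s : ℕ) :
    #{S ∈ (univ : Finset (Fin L)).powersetCard s | IsSeparated m (S.map Fin.valEmbedding)}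
      = (L - (s - 1) * (m - 1)).choose s := by
  rw [← card_separated hm, ← Nat.Iio_eq_range, ← Fin.map_valEmbedding_univ, powersetCard_map,
    filter_map, card_map]
  rfl

theorem occursAt_ofFn {A : Type*} {m N k : ℕ} {w : Fin m → A} {y : Fin N → A} (hk : k + m ≤ N)
    (h : ∀ j : Fin m, y ⟨k + j, by omega⟩ = w j) : occursAt (List.ofFn w) (List.ofFn y) k := by
  refine ⟨by simpa using hk, List.ext_getElem (by simp; omega) fun r h₁ h₂ => ?_⟩
  simp only [List.length_ofFn, List.getElem_take, List.getElem_drop, List.getElem_ofFn]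
  exact h ⟨r, h₂.trans_eq (List.length_ofFn)⟩

section Occurrences

/- `pos i j` is the position `i + j` of the `j`-th letter of a window starting at `i`; it is kept
abstract so that no proof of `i + j < n` has to be carried around. -/
variable {A : Type*} {n m L : ℕ} {pos : Fin L → Fin m → Fin n}

theorem NonOverlapping.false_of_lt_of_lt {w : Fin m → A} (hw : NonOverlapping (List.ofFn w))
    (hpos : ∀ i j, (pos i j : ℕ) = i + j) (x : Fin n → A) {i j : Fin L} (hij : i < j)
    (hji : (j : ℕ) < i + m) (hi : ∀ k, x (pos i k) = w k) (hj : ∀ k, x (pos j k) = w k) :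
    False := by
  have hij' : (i : ℕ) < j := hij
  have hjn : (j : ℕ) + m ≤ n := by
    have := (pos j ⟨m - 1, by omega⟩).isLt
    simp only [hpos] at this
    omega
  apply hw
  refine ⟨List.ofFn fun r : Fin (j - i + m) => x ⟨i + r, by omega⟩, 0, j - i, by simp; omega,
    occursAt_ofFn (by omega) fun k => ?_, occursAt_ofFn le_rfl fun k => ?_, Or.inr (by omega)⟩
  · rw [← hi k]
    exact congrArg x (Fin.ext (by simp [hpos]))
  · rw [← hj k]
    exact congrArg x (Fin.ext (by simp [hpos]; omega))

theorem injOn_pos_of_isSeparated (hpos : ∀ i j, (pos i j : ℕ) = i + j) {S : Finset (Fin L)}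
    (hS : IsSeparated m (S.map Fin.valEmbedding)) :
    Set.InjOn (fun q : Fin L × Fin m => pos q.1 q.2) ↑(S ×ˢ (univ : Finset (Fin m))) := by
  rw [isSeparated_map_val] at hS
  rintro ⟨i, k⟩ hik ⟨j, l⟩ hjl hpq
  rw [mem_coe, mem_product] at hik hjl
  have hv := congrArg Fin.val hpq
  simp only [hpos] at hv
  have := k.isLt
  have := l.isLt
  rcases lt_trichotomy i j with h | rfl | h
  · have := hS i hik.1 j hjl.1 h; omega
  · simp only [Prod.mk.injEq, true_and]; exact Fin.ext (by omega)
  · have := hS j hjl.1 i hik.1 h; omega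

variable {R : Type*} [CommRing R] [Fintype A] [DecidableEq A] {p : A → R} {w : Fin m → A}

theorem sum_prod_mul_occurrences (hp : ∑ a, p a = 1) (hw : NonOverlapping (List.ofFn w))
    (hpos : ∀ i j, (pos i j : ℕ) = i + j) (S : Finset (Fin L)) :
    ∑ x : Fin n → A, (∏ k, p (x k)) * ∏ i ∈ S, (if ∀ j, x (pos i j) = w j then (1 : R) else 0)
      = if IsSeparated m (S.map Fin.valEmbedding) then (∏ j, p (w j)) ^ #S else 0 := by
  split_ifs with hS
  · have hboole : ∀ x : Fin n → A,
        ∏ i ∈ S, (if ∀ j, x (pos i j) = w j then (1 : R) else 0)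
          = ∏ q ∈ S ×ˢ (univ : Finset (Fin m)), if x (pos q.1 q.2) = w q.2 then 1 else 0 := by
      intro x
      rw [prod_product]
      refine prod_congr rfl fun i _ => ?_
      rw [Fintype.prod_boole]
      congr
    simp_rw [hboole]
    rw [sum_prod_mul_prod_boole_eq_prod hp (injOn_pos_of_isSeparated hpos hS) (fun q => w q.2),
      prod_product]
    exact prod_const (∏ j, p (w j))
  · obtain ⟨i, hiS, j, hjS, hij, hji⟩ : ∃ i ∈ S, ∃ j ∈ S, i < j ∧ (j : ℕ) < i + m := by
      simpa [isSeparated_map_val] using hS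
    refine sum_eq_zero fun x _ => mul_eq_zero_of_right _ ?_
    by_cases hi : ∀ k, x (pos i k) = w k
    · exact prod_eq_zero hjS (if_neg fun hj => hw.false_of_lt_of_lt hpos x hij hji hi hj)
    · exact prod_eq_zero hiS (if_neg hi)

theorem sum_prod_mul_card_occurrences_pow (hm : 1 ≤ m) (hp : ∑ a, p a = 1)
    (hw : NonOverlapping (List.ofFn w)) (hpos : ∀ i j, (pos i j : ℕ) = i + j) (t : ℕ) :
    ∑ x : Fin n → A, (∏ k, p (x k)) * (∑ i, if ∀ j, x (pos i j) = w j then (1 : R) else 0) ^ t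
      = ∑ s ∈ range (L + 1),
          surjCount R t s * ((L - (s - 1) * (m - 1)).choose s : R) * (∏ j, p (w j)) ^ s := by
  have hidem : ∀ (x : Fin n → A) i,
      IsIdempotentElem (if ∀ j, x (pos i j) = w j then (1 : R) else 0) := by
    intro x i
    split_ifs <;> simp [IsIdempotentElem]
  calc _ = ∑ S ∈ univ.powerset, surjCount R t #S *
          ∑ x : Fin n → A, (∏ k, p (x k)) * ∏ i ∈ S, (if ∀ j, x (pos i j) = w j then 1 else 0) := by
        simp_rw [sum_pow_eq_sum_powerset (hidem _), mul_sum, nsmul_eq_mul, card_filter_image_eq,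
          mul_left_comm]
        exact sum_comm
    _ = ∑ s ∈ range (L + 1), ∑ S ∈ univ.powersetCard s,
          surjCount R t s * if IsSeparated m (S.map Fin.valEmbedding) then (∏ j, p (w j)) ^ s
            else 0 := by
        simp_rw [sum_prod_mul_occurrences hp hw hpos]
        rw [sum_powerset, card_univ, Fintype.card_fin]
        exact sum_congr rfl fun s _ => sum_congr rfl fun S hS => by
          rw [(mem_powersetCard.1 hS).2]
    _ = _ := by
        refine sum_congr rfl fun s _ => ?_
        rw [← card_separated_fin hm L s, ← mul_sum, ← sum_filter, sum_const, nsmul_eq_mul]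
        ring

end Occurrences

theorem sub_one_mul_sub_one_add_add {s m : ℕ} (hs : 1 ≤ s) (hm : 1 ≤ m) :
    (s - 1) * (m - 1) + s + m = s * m + 1 := by
  obtain ⟨a, rfl⟩ := Nat.exists_eq_add_of_le' hs
  obtain ⟨b, rfl⟩ := Nat.exists_eq_add_of_le' hm
  simp only [Nat.add_sub_cancel]
  ring

theorem sum_range_surjCount_eq_sum_Icc {R : Type*} [CommRing R] {n m t : ℕ} (hm : 1 ≤ m)
    (hmn : m ≤ n) (ht : 1 ≤ t) (c : R) :
    ∑ s ∈ range (n - m + 1 + 1),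
        surjCount R t s * ((n - m + 1 - (s - 1) * (m - 1)).choose s : R) * c ^ s
      = ∑ s ∈ Icc 1 (min (n / m) t), surjCount R t s * ((n - s * m + s).choose s : R) * c ^ s := by
  have hdiv : ∀ s, s ≤ n / m ↔ s * m ≤ n := fun s => Nat.le_div_iff_mul_le (by omega)
  symm
  refine sum_subset_zero_on_sdiff (fun s hs => ?_) (fun s hs => ?_) (fun s hs => ?_)
  · rw [mem_Icc, le_min_iff, hdiv] at hs
    have := sub_one_mul_sub_one_add_add hs.1 hm
    rw [mem_range]
    omega
  · rw [mem_sdiff, mem_range, mem_Icc, le_min_iff, hdiv] at hs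
    rcases Nat.eq_zero_or_pos s with rfl | hs1
    · simp [surjCount_zero_right (R := R) (by omega : t ≠ 0)]
    by_cases hst : t < s
    · simp [surjCount_eq_zero_of_lt hst]
    have := sub_one_mul_sub_one_add_add hs1 hm
    rw [Nat.choose_eq_zero_of_lt (by omega)]
    simp
  · rw [mem_Icc, le_min_iff, hdiv] at hs
    have := sub_one_mul_sub_one_add_add hs.1 hm
    rw [show n - m + 1 - (s - 1) * (m - 1) = n - s * m + s by omega]

/-- Higher moments of the sliding-block count of a non-overlapping word `w`:
`E(N_w^t) = ∑_{s=1}^{min(T,t)} A_{t,s} (n - s m + s choose s) P(w)^s`, where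
`A_{t,s} = ∑_r (s choose r) r^t (-1)^{s-r}` and `T = max{t : n - t m ≥ 0} = ⌊n/m⌋`. -/
theorem stmt10 {A : Type*} [Fintype A] [DecidableEq A]
    (p : A → ℝ) (hp1 : ∑ a, p a = 1)
    (n m : ℕ) (hm : 1 ≤ m) (hmn : m ≤ n)
    (w : Fin m → A) (hw : NonOverlapping (List.ofFn w))
    (t : ℕ) (ht : 1 ≤ t) :
    ∑ x : Fin n → A, (∏ i, p (x i)) *
        (∑ i : Fin (n - m + 1),
          if ∀ j : Fin m, x ⟨i.val + j.val, by have := i.isLt; have := j.isLt; omega⟩ = w j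
          then (1 : ℝ) else 0) ^ t
      = ∑ s ∈ Finset.Icc 1 (min (n / m) t),
          (∑ r ∈ Finset.range (s + 1), (s.choose r : ℝ) * (r : ℝ) ^ t * (-1 : ℝ) ^ (s - r)) *
            ((n - s * m + s).choose s : ℝ) * (∏ j, p (w j)) ^ s :=
  (sum_prod_mul_card_occurrences_pow hm hp1 hw (fun _ _ => rfl) t).trans
    (sum_range_surjCount_eq_sum_Icc hm hmn ht _)
end

section
/- For every m ≥ 1 and n ≥ 0, the set of realizations of the sparse binary pattern 0^{m+1}(1?^m)^n 1 is a non-overlapping set of words. -/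
/-- `w` is a realization of the sparse pattern `pat` (entries `none` are wildcards `?`). -/
def Realizes (pat : List (Option Bool)) (w : List Bool) : Prop :=
  List.Forall₂ (fun o b => ∀ a ∈ o, b = a) pat w

/-- The sparse pattern `0^{m+1} (1 ?^m)^n 1`. -/
def sparsePat (m n : ℕ) : List (Option Bool) :=
  List.replicate (m + 1) (some false) ++
    (List.replicate n ((some true) :: List.replicate m (none : Option Bool))).flatten ++
    [some true]

lemma flatlen (m n : ℕ) :
    ((List.replicate n ((some true) :: List.replicate m (none : Option Bool))).flatten).length
      = n*(m+1) := by
  simp [List.length_flatten, List.map_replicate, List.sum_replicate]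

lemma sparsePat_length (m n : ℕ) : (sparsePat m n).length = (m+1)*(n+1)+1 := by
  simp [sparsePat, List.length_flatten, List.map_replicate, List.sum_replicate]
  ring

lemma realizes_get? {pat : List (Option Bool)} {w : List Bool} (h : Realizes pat w)
    {k : ℕ} {b : Bool} (hk : pat[k]? = some (some b)) : w[k]? = some b := by
  rw [Realizes, List.forall₂_iff_get] at h
  obtain ⟨hlen, hget⟩ := h
  have hk1 : k < pat.length := by
    by_contra hc
    rw [List.getElem?_eq_none (Nat.le_of_not_lt hc)] at hk
    exact Option.some_ne_none _ hk.symm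
  have hk2 : k < w.length := hlen ▸ hk1
  have := hget k hk1 hk2
  rw [List.get_eq_getElem, List.get_eq_getElem] at this
  rw [List.getElem?_eq_getElem hk1] at hk
  have hb : pat[k] = some b := Option.some.inj hk
  rw [List.getElem?_eq_getElem hk2]
  exact congrArg _ (this b (hb ▸ rfl))

lemma sparsePat_false (m n k : ℕ) (hk : k ≤ m) :
    (sparsePat m n)[k]? = some (some false) := by
  have h1 : k < (List.replicate (m+1) (some false : Option Bool)).length := by
    simp; omega
  have h2 : k < (List.replicate (m+1) (some false : Option Bool) ++
      (List.replicate n ((some true) :: List.replicate m (none : Option Bool))).flatten).length := by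
    rw [List.length_append]
    exact Nat.lt_of_lt_of_le h1 (Nat.le_add_right _ _)
  rw [sparsePat, List.getElem?_append_left h2, List.getElem?_append_left h1,
    List.getElem?_replicate_of_lt (by simp at h1 ⊢; omega)]

lemma flat_true (m : ℕ) : ∀ n q : ℕ, q < n →
    ((List.replicate n ((some true) :: List.replicate m (none : Option Bool))).flatten)[q*(m+1)]?
      = some (some true) := by
  intro n
  induction n with
  | zero => intro q hq; omega
  | succ n ih =>
    intro q hq
    rw [List.replicate_succ, List.flatten_cons]
    match q with
    | 0 =>
      rw [List.getElem?_append_left (by simp)]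
      simp
    | q+1 =>
      have hlen : ((some true) :: List.replicate m (none : Option Bool)).length = m+1 := by simp
      have hle : ((some true) :: List.replicate m (none : Option Bool)).length ≤ (q+1)*(m+1) := by
        rw [hlen, Nat.succ_mul]
        exact Nat.le_add_left _ _
      rw [List.getElem?_append_right hle, hlen]
      have h2 : (q+1)*(m+1) - (m+1) = q*(m+1) := by
        rw [Nat.succ_mul, Nat.add_sub_cancel]
      rw [h2]
      exact ih q (by omega)

lemma sparsePat_true (m n q : ℕ) (h1 : 1 ≤ q) (h2 : q ≤ n+1) :
    (sparsePat m n)[q*(m+1)]? = some (some true) := by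
  have hABlen : (List.replicate (m+1) (some false : Option Bool) ++
      (List.replicate n ((some true) :: List.replicate m (none : Option Bool))).flatten).length
      = (m+1) + n*(m+1) := by
    rw [List.length_append, List.length_replicate, flatlen]
  rw [sparsePat]
  rcases Nat.lt_or_ge q (n+1) with hc | hc
  · -- q ≤ n : inside A ++ B
    have hq : q*(m+1) < (m+1) + n*(m+1) := by
      have : q*(m+1) ≤ n*(m+1) := Nat.mul_le_mul_right _ (by omega)
      omega
    rw [List.getElem?_append_left (by rw [hABlen]; exact hq)]
    have hge : (List.replicate (m+1) (some false : Option Bool)).length ≤ q*(m+1) := by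
      rw [List.length_replicate]
      calc m+1 = 1*(m+1) := by ring
      _ ≤ q*(m+1) := Nat.mul_le_mul_right _ h1
    rw [List.getElem?_append_right hge, List.length_replicate]
    obtain ⟨q', rfl⟩ : ∃ q', q = q' + 1 := ⟨q-1, by omega⟩
    have h2' : (q'+1)*(m+1) - (m+1) = q'*(m+1) := by
      rw [Nat.succ_mul, Nat.add_sub_cancel]
    rw [h2']
    exact flat_true m n q' (by omega)
  · -- q = n+1 : the last element
    have hq : q = n + 1 := by omega
    subst hq
    have heq : (n+1)*(m+1) = (m+1) + n*(m+1) := by ring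
    rw [List.getElem?_append_right (by rw [hABlen, heq])]
    rw [hABlen, heq, Nat.sub_self]
    simp

/-- The core overlap argument. -/
lemma core (m n : ℕ) (hm : 1 ≤ m) (w1 w2 x : List Bool) (i j : ℕ)
    (h1 : Realizes (sparsePat m n) w1) (h2 : Realizes (sparsePat m n) w2)
    (hx : x.length < w1.length + w2.length)
    (o1 : occursAt w1 x i) (o2 : occursAt w2 x j) (hij : i < j) : False := by
  obtain ⟨M, hM⟩ : ∃ M, M = (m+1)*(n+1) := ⟨_, rfl⟩
  have hl1 : w1.length = M + 1 := by
    rw [← (List.forall₂_iff_get.1 h1).1, sparsePat_length, hM]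
  have hl2 : w2.length = M + 1 := by
    rw [← (List.forall₂_iff_get.1 h2).1, sparsePat_length, hM]
  obtain ⟨o1a, o1b⟩ := o1
  obtain ⟨o2a, o2b⟩ := o2
  rw [hl1] at o1a
  rw [hl2] at o2a
  rw [hl1, hl2] at hx
  obtain ⟨d, hd⟩ : ∃ d, j = i + d := ⟨j - i, by omega⟩
  have hd1 : 1 ≤ d := by omega
  have hdM : d ≤ M := by omega
  obtain ⟨q, hq⟩ : ∃ q, q = (d+m)/(m+1) := ⟨_, rfl⟩
  obtain ⟨p, hp⟩ : ∃ p, p = q*(m+1) := ⟨_, rfl⟩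
  have hq1 : 1 ≤ q := by
    rw [hq]
    exact (Nat.le_div_iff_mul_le (by omega)).2 (by omega)
  have hq2 : q ≤ n + 1 := by
    have hlt : d + m < (m+1) * (n+2) := by nlinarith
    have := (Nat.div_lt_iff_lt_mul (show 0 < m+1 by omega)).2
      (by rw [Nat.mul_comm]; exact hlt)
    omega
  have hpd : d ≤ p := by
    have hmod := Nat.div_add_mod (d+m) (m+1)
    have hr := Nat.mod_lt (d+m) (show 0 < m+1 by omega)
    nlinarith [hmod, hr, hp, hq]
  have hpdm : p ≤ d + m := by
    rw [hp, hq]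
    exact Nat.div_mul_le_self _ _
  have hpM : p ≤ M := by
    have := Nat.mul_le_mul_right (m+1) hq2
    nlinarith [this, hp, hM]
  -- pattern values
  have hw1p : w1[p]? = some true := by
    have := sparsePat_true m n q hq1 hq2
    rw [← hp] at this
    exact realizes_get? h1 this
  have hw2p : w2[p-d]? = some false :=
    realizes_get? h2 (sparsePat_false m n (p-d) (by omega))
  -- relate to x
  have e1 : w1[p]? = x[i+p]? := by
    rw [← o1b, List.getElem?_take_of_lt (by rw [hl1]; omega), List.getElem?_drop]
  have e2 : w2[p-d]? = x[j+(p-d)]? := by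
    rw [← o2b, List.getElem?_take_of_lt (by rw [hl2]; omega), List.getElem?_drop]
  have hidx : j + (p - d) = i + p := by omega
  rw [hidx] at e2
  rw [e1] at hw1p
  rw [e2] at hw2p
  rw [hw1p] at hw2p
  exact Bool.noConfusion (Option.some.inj hw2p)

/-- For every `m ≥ 1` and `n`, the sparse pattern `0^{m+1}(1?^m)^n 1` is non-overlapping:
its set of realizations is a non-overlapping set of words. -/
theorem stmt13 (m n : ℕ) (hm : 1 ≤ m) :
    ∀ w1 w2 : List Bool, Realizes (sparsePat m n) w1 → Realizes (sparsePat m n) w2 →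
      NonOverlappingPair w1 w2 := by
  intro w1 w2 h1 h2
  rintro ⟨x, i, j, hlen, o1, o2, hne⟩
  rcases Nat.lt_trichotomy i j with hij | hij | hij
  · exact core m n hm w1 w2 x i j h1 h2 hlen o1 o2 hij
  · subst hij
    have hl1 : w1.length = (sparsePat m n).length := (List.forall₂_iff_get.1 h1).1.symm
    have hl2 : w2.length = (sparsePat m n).length := (List.forall₂_iff_get.1 h2).1.symm
    have : w1 = w2 := by
      rw [← o1.2, ← o2.2, hl1, hl2]
    rcases hne with h | h
    · exact h this
    · exact h rfl
  · exact core m n hm w2 w1 x j i h2 h1 (by omega) o2 o1 hij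
end
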